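/- Let C and D be closed model categories and (S, U): C → D a Quillen equivalence. If Y is a fibrant object of D, then the induced Quillen adjunction (S̃, Ũ): (C↓U(Y)) → (D↓Y) between the slice categories is a Quillen equivalence. -/

import Mathlib

open CategoryTheory CategoryTheory.Limits

universe v u v' u'

/-- `f` is a retract of `g` in the arrow category. -/
def IsRetractOfArrow {C : Type u} [Category.{v} C] {A B A' B' : C}
    (f : A ⟶ B) (g : A' ⟶ B') : Prop :=
  ∃ (i : Arrow.mk f ⟶ Arrow.mk g) (r : Arrow.mk g ⟶ Arrow.mk f), i ≫ r = 𝟙 (Arrow.mk f)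

/-- A (closed) model structure on a category `C`, in the sense of Quillen: three classes of
morphisms (cofibrations, fibrations, weak equivalences) satisfying the two-out-of-three
axiom, closure under retracts, the lifting axioms and the factorization axioms. -/
structure ModelStruct (C : Type u) [Category.{v} C] : Type (max u v) where
  cof : MorphismProperty C
  fib : MorphismProperty C
  weq : MorphismProperty C
  weq_comp : ∀ {X Y Z : C} (f : X ⟶ Y) (g : Y ⟶ Z), weq f → weq g → weq (f ≫ g)
  weq_cancel_left : ∀ {X Y Z : C} (f : X ⟶ Y) (g : Y ⟶ Z), weq f → weq (f ≫ g) → weq g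
  weq_cancel_right : ∀ {X Y Z : C} (f : X ⟶ Y) (g : Y ⟶ Z), weq g → weq (f ≫ g) → weq f
  cof_retract : ∀ {A B A' B' : C} {f : A ⟶ B} {g : A' ⟶ B'},
    IsRetractOfArrow f g → cof g → cof f
  fib_retract : ∀ {A B A' B' : C} {f : A ⟶ B} {g : A' ⟶ B'},
    IsRetractOfArrow f g → fib g → fib f
  weq_retract : ∀ {A B A' B' : C} {f : A ⟶ B} {g : A' ⟶ B'},
    IsRetractOfArrow f g → weq g → weq f
  lifting_cof_trivFib : ∀ {A B X Y : C} (i : A ⟶ B) (p : X ⟶ Y),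
    cof i → fib p → weq p → HasLiftingProperty i p
  lifting_trivCof_fib : ∀ {A B X Y : C} (i : A ⟶ B) (p : X ⟶ Y),
    cof i → weq i → fib p → HasLiftingProperty i p
  factor_cof_trivFib : ∀ {X Y : C} (f : X ⟶ Y),
    ∃ (Z : C) (i : X ⟶ Z) (p : Z ⟶ Y), cof i ∧ fib p ∧ weq p ∧ i ≫ p = f
  factor_trivCof_fib : ∀ {X Y : C} (f : X ⟶ Y),
    ∃ (Z : C) (i : X ⟶ Z) (p : Z ⟶ Y), cof i ∧ weq i ∧ fib p ∧ i ≫ p = f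

variable {C : Type u} [Category.{v} C]

/-- An object is cofibrant if the unique map from the initial object to it is a cofibration. -/
def ModelStruct.Cofibrant [HasInitial C] (M : ModelStruct C) (A : C) : Prop :=
  M.cof (initial.to A)

/-- An object is fibrant if the unique map from it to the terminal object is a fibration. -/
def ModelStruct.Fibrant [HasTerminal C] (M : ModelStruct C) (A : C) : Prop :=
  M.fib (terminal.from A)

/-- The induced model structure on the coslice category `(X ↓ C)`: a morphism is a
cofibration, fibration or weak equivalence iff its underlying morphism in `C` is one. -/
def ModelStruct.under (M : ModelStruct C) (X : C) : ModelStruct (Under X) where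
  cof _ _ f := M.cof f.right
  fib _ _ f := M.fib f.right
  weq _ _ f := M.weq f.right
  weq_comp f g hf hg := by simpa using M.weq_comp f.right g.right hf hg
  weq_cancel_left f g hf hfg := M.weq_cancel_left f.right g.right hf (by simpa using hfg)
  weq_cancel_right f g hg hfg := M.weq_cancel_right f.right g.right hg (by simpa using hfg)
  cof_retract := fun ⟨i, r, hir⟩ hg => M.cof_retract
    ⟨(Under.forget X).mapArrow.map i, (Under.forget X).mapArrow.map r,
      ((Under.forget X).mapArrow.map_comp i r).symm.trans
        (by rw [hir, CategoryTheory.Functor.map_id]; rfl)⟩ hg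
  fib_retract := fun ⟨i, r, hir⟩ hg => M.fib_retract
    ⟨(Under.forget X).mapArrow.map i, (Under.forget X).mapArrow.map r,
      ((Under.forget X).mapArrow.map_comp i r).symm.trans
        (by rw [hir, CategoryTheory.Functor.map_id]; rfl)⟩ hg
  weq_retract := fun ⟨i, r, hir⟩ hg => M.weq_retract
    ⟨(Under.forget X).mapArrow.map i, (Under.forget X).mapArrow.map r,
      ((Under.forget X).mapArrow.map_comp i r).symm.trans
        (by rw [hir, CategoryTheory.Functor.map_id]; rfl)⟩ hg
  lifting_cof_trivFib i p hi hp hp' := by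
    constructor
    intro f g sq
    haveI := M.lifting_cof_trivFib i.right p.right hi hp hp'
    have sq' : CommSq f.right i.right p.right g.right :=
      ⟨by rw [← Under.comp_right, sq.w, Under.comp_right]⟩
    exact ⟨⟨⟨Under.homMk sq'.lift (by
        rw [← Under.w i, Category.assoc, sq'.fac_left, Under.w f]),
      by ext; exact sq'.fac_left, by ext; exact sq'.fac_right⟩⟩⟩
  lifting_trivCof_fib i p hi hi' hp := by
    constructor
    intro f g sq
    haveI := M.lifting_trivCof_fib i.right p.right hi hi' hp
    have sq' : CommSq f.right i.right p.right g.right :=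
      ⟨by rw [← Under.comp_right, sq.w, Under.comp_right]⟩
    exact ⟨⟨⟨Under.homMk sq'.lift (by
        rw [← Under.w i, Category.assoc, sq'.fac_left, Under.w f]),
      by ext; exact sq'.fac_left, by ext; exact sq'.fac_right⟩⟩⟩
  factor_cof_trivFib {A B} f := by
    obtain ⟨Z, i, p, hi, hp, hp', hfac⟩ := M.factor_cof_trivFib f.right
    exact ⟨Under.mk (A.hom ≫ i), Under.homMk i rfl,
      Under.homMk p (by show (A.hom ≫ i) ≫ p = B.hom; rw [Category.assoc, hfac, Under.w f]),
      hi, hp, hp', by ext; exact hfac⟩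
  factor_trivCof_fib {A B} f := by
    obtain ⟨Z, i, p, hi, hi', hp, hfac⟩ := M.factor_trivCof_fib f.right
    exact ⟨Under.mk (A.hom ≫ i), Under.homMk i rfl,
      Under.homMk p (by show (A.hom ≫ i) ≫ p = B.hom; rw [Category.assoc, hfac, Under.w f]),
      hi, hi', hp, by ext; exact hfac⟩

/-- The induced model structure on the slice category `(C ↓ X)`: a morphism is a
cofibration, fibration or weak equivalence iff its underlying morphism in `C` is one. -/
def ModelStruct.over (M : ModelStruct C) (X : C) : ModelStruct (Over X) where
  cof _ _ f := M.cof f.left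
  fib _ _ f := M.fib f.left
  weq _ _ f := M.weq f.left
  weq_comp f g hf hg := by simpa using M.weq_comp f.left g.left hf hg
  weq_cancel_left f g hf hfg := M.weq_cancel_left f.left g.left hf (by simpa using hfg)
  weq_cancel_right f g hg hfg := M.weq_cancel_right f.left g.left hg (by simpa using hfg)
  cof_retract := fun ⟨i, r, hir⟩ hg => M.cof_retract
    ⟨(Over.forget X).mapArrow.map i, (Over.forget X).mapArrow.map r,
      ((Over.forget X).mapArrow.map_comp i r).symm.trans
        (by rw [hir, CategoryTheory.Functor.map_id]; rfl)⟩ hg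
  fib_retract := fun ⟨i, r, hir⟩ hg => M.fib_retract
    ⟨(Over.forget X).mapArrow.map i, (Over.forget X).mapArrow.map r,
      ((Over.forget X).mapArrow.map_comp i r).symm.trans
        (by rw [hir, CategoryTheory.Functor.map_id]; rfl)⟩ hg
  weq_retract := fun ⟨i, r, hir⟩ hg => M.weq_retract
    ⟨(Over.forget X).mapArrow.map i, (Over.forget X).mapArrow.map r,
      ((Over.forget X).mapArrow.map_comp i r).symm.trans
        (by rw [hir, CategoryTheory.Functor.map_id]; rfl)⟩ hg
  lifting_cof_trivFib i p hi hp hp' := by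
    constructor
    intro f g sq
    haveI := M.lifting_cof_trivFib i.left p.left hi hp hp'
    have sq' : CommSq f.left i.left p.left g.left :=
      ⟨by rw [← Over.comp_left, sq.w, Over.comp_left]⟩
    exact ⟨⟨⟨Over.homMk sq'.lift (by
        rw [← Over.w p, ← Category.assoc, sq'.fac_right, Over.w g]),
      by ext; exact sq'.fac_left, by ext; exact sq'.fac_right⟩⟩⟩
  lifting_trivCof_fib i p hi hi' hp := by
    constructor
    intro f g sq
    haveI := M.lifting_trivCof_fib i.left p.left hi hi' hp
    have sq' : CommSq f.left i.left p.left g.left :=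
      ⟨by rw [← Over.comp_left, sq.w, Over.comp_left]⟩
    exact ⟨⟨⟨Over.homMk sq'.lift (by
        rw [← Over.w p, ← Category.assoc, sq'.fac_right, Over.w g]),
      by ext; exact sq'.fac_left, by ext; exact sq'.fac_right⟩⟩⟩
  factor_cof_trivFib {A B} f := by
    obtain ⟨Z, i, p, hi, hp, hp', hfac⟩ := M.factor_cof_trivFib f.left
    exact ⟨Over.mk (p ≫ B.hom), Over.homMk i (by show i ≫ p ≫ B.hom = A.hom; rw [← Category.assoc, hfac, Over.w f]),
      Over.homMk p rfl, hi, hp, hp', by ext; exact hfac⟩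
  factor_trivCof_fib {A B} f := by
    obtain ⟨Z, i, p, hi, hi', hp, hfac⟩ := M.factor_trivCof_fib f.left
    exact ⟨Over.mk (p ≫ B.hom), Over.homMk i (by show i ≫ p ≫ B.hom = A.hom; rw [← Category.assoc, hfac, Over.w f]),
      Over.homMk p rfl, hi, hi', hp, by ext; exact hfac⟩

noncomputable instance (X : C) : HasInitial (Under X) :=
  Under.mkIdInitial.hasInitial

noncomputable instance (X : C) : HasTerminal (Over X) :=
  Over.mkIdTerminal.hasTerminal

/-- The terminal object of `(X ↓ C)` is `X ⟶ *`. -/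
noncomputable def underMkTerminal [HasTerminal C] (X : C) :
    IsTerminal (Under.mk (terminal.from X)) :=
  IsTerminal.ofUniqueHom (fun u => Under.homMk (terminal.from u.right)
      (terminal.hom_ext _ _))
    (fun u m => by ext; exact terminal.hom_ext _ _)

noncomputable instance [HasTerminal C] (X : C) : HasTerminal (Under X) :=
  (underMkTerminal X).hasTerminal

/-- The initial object of `(C ↓ X)` is `∅ ⟶ X`. -/
noncomputable def overMkInitial [HasInitial C] (X : C) :
    IsInitial (Over.mk (initial.to X)) :=
  IsInitial.ofUniqueHom (fun u => Over.homMk (initial.to u.left)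
      (initial.hom_ext _ _))
    (fun u m => by ext; exact initial.hom_ext _ _)

noncomputable instance [HasInitial C] (X : C) : HasInitial (Over X) :=
  (overMkInitial X).hasInitial

/-- A Quillen adjunction between model categories: an adjoint pair whose left adjoint
preserves cofibrations and acyclic cofibrations. -/
structure QuillenAdjunction {C : Type u} [Category.{v} C] {D : Type u'} [Category.{v'} D]
    (M : ModelStruct C) (N : ModelStruct D) (F : C ⥤ D) (G : D ⥤ C) where
  adj : F ⊣ G
  map_cof : ∀ {A B : C} (f : A ⟶ B), M.cof f → N.cof (F.map f)
  map_trivCof_weq : ∀ {A B : C} (f : A ⟶ B), M.cof f → M.weq f → N.weq (F.map f)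

/-- A Quillen adjunction is a Quillen equivalence if for every cofibrant `A` and fibrant `B`,
a map `F A ⟶ B` is a weak equivalence iff its adjunct `A ⟶ G B` is. -/
def IsQuillenEquivalence {C : Type u} [Category.{v} C] {D : Type u'} [Category.{v'} D]
    [HasInitial C] [HasTerminal D]
    (M : ModelStruct C) (N : ModelStruct D) {F : C ⥤ D} {G : D ⥤ C} (adj : F ⊣ G) : Prop :=
  ∀ (A : C) (B : D), M.Cofibrant A → N.Fibrant B →
    ∀ f : F.obj A ⟶ B, N.weq f ↔ M.weq ((adj.homEquiv A B) f)


/-!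
Cofibrations, fibrations and weak equivalences of the slice categories are detected on
underlying morphisms, and the underlying morphism of the slice adjunct of `f : S̃ A ⟶ B` is
the adjunct of `f.left` for `(S, U)`. So the equivalence criterion for `(S̃, Ũ)` at `(A, B)` is
the one for `(S, U)` at `(A.left, B.left)`, once `A.left` is cofibrant and `B.left` fibrant.
The first holds because the initial object of `C ↓ U Y` lies over the initial object of `C`;
the second because `B.left ⟶ Y ⟶ *` is a composite of fibrations, which is where fibrancy of
`Y` is needed.
-/

lemma CategoryTheory.RetractArrow.isRetractOfArrow {A B A' B' : C} {f : A ⟶ B} {g : A' ⟶ B'}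
    (h : RetractArrow f g) : IsRetractOfArrow f g :=
  ⟨h.i, h.r, h.retract⟩

namespace ModelStruct

variable (M : ModelStruct C)

instance : M.cof.IsStableUnderRetracts :=
  ⟨fun h => M.cof_retract h.isRetractOfArrow⟩

instance : M.fib.IsStableUnderRetracts :=
  ⟨fun h => M.fib_retract h.isRetractOfArrow⟩

def trivCof : MorphismProperty C :=
  M.cof ⊓ M.weq

instance : MorphismProperty.HasFactorization M.trivCof M.fib :=
  ⟨fun f => by
    obtain ⟨Z, i, p, hi, hi', hp, hfac⟩ := M.factor_trivCof_fib f
    exact ⟨{ Z, i, p, fac := hfac, hi := ⟨hi, hi'⟩, hp }⟩⟩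

lemma trivCof_rlp : M.trivCof.rlp = M.fib :=
  MorphismProperty.rlp_eq_of_le_rlp_of_hasFactorization_of_isStableUnderRetracts
    fun _ _ _ hp _ _ _ hi => M.lifting_trivCof_fib _ _ hi.1 hi.2 hp

instance : M.fib.IsMultiplicative :=
  M.trivCof_rlp ▸ inferInstance

end ModelStruct

lemma CategoryTheory.Over.isIso_hom_of_isTerminal {X : C} {T : Over X} (hT : IsTerminal T) :
    IsIso T.hom := by
  let e := Over.mkIdTerminal.uniqueUpToIso hT
  rw [← Over.w e.inv]
  exact IsIso.comp_isIso' ((Over.forget X).mapIso e).isIso_inv (IsIso.id X)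

noncomputable def CategoryTheory.Limits.IsInitial.overLeft [HasInitial C] {X : C} {I : Over X}
    (hI : IsInitial I) : IsInitial I.left :=
  initialIsInitial.ofIso ((Over.forget X).mapIso ((overMkInitial X).uniqueUpToIso hI))

lemma ModelStruct.Cofibrant.left [HasInitial C] {M : ModelStruct C} {X : C} {A : Over X}
    (hA : (M.over X).Cofibrant A) : M.Cofibrant A.left := by
  have e := initialIsInitial.uniqueUpToIso (initialIsInitial : IsInitial (⊥_ Over X)).overLeft
  have : initial.to A.left = e.hom ≫ (initial.to A).left := initial.hom_ext _ _
  rw [ModelStruct.Cofibrant, this]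
  exact (M.cof.cancel_left_of_respectsIso _ _).mpr hA

lemma ModelStruct.Fibrant.fib_hom {M : ModelStruct C} {X : C} {B : Over X}
    (hB : (M.over X).Fibrant B) : M.fib B.hom := by
  have := Over.isIso_hom_of_isTerminal (terminalIsTerminal : IsTerminal (⊤_ Over X))
  rw [← Over.w (terminal.from B)]
  exact (M.fib.cancel_right_of_respectsIso _ _).mpr hB

lemma ModelStruct.Fibrant.left [HasTerminal C] {M : ModelStruct C} {X : C} {B : Over X}
    (hB : (M.over X).Fibrant B) (hX : M.Fibrant X) : M.Fibrant B.left := by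
  rw [ModelStruct.Fibrant, ← terminal.comp_from B.hom]
  exact M.fib.comp_mem _ _ hB.fib_hom hX

lemma CategoryTheory.Over.postAdjunctionRight_homEquiv_left {D : Type u'} [Category.{v'} D]
    {S : C ⥤ D} {U : D ⥤ C} (adj : S ⊣ U) {Y : D} (A : Over (U.obj Y)) (B : Over Y)
    (f : (Over.post S ⋙ Over.map (adj.counit.app Y)).obj A ⟶ B) :
    ((Over.postAdjunctionRight adj).homEquiv A B f).left = adj.homEquiv A.left B.left f.left := by
  rw [Adjunction.homEquiv_unit]
  exact (adj.homEquiv_unit _ _ _).symm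

noncomputable def QuillenAdjunction.over {D : Type u'} [Category.{v'} D] {M : ModelStruct C}
    {N : ModelStruct D} {S : C ⥤ D} {U : D ⥤ C} (Q : QuillenAdjunction M N S U) (Y : D) :
    QuillenAdjunction (M.over (U.obj Y)) (N.over Y)
      (Over.post S ⋙ Over.map (Q.adj.counit.app Y)) (Over.post U) where
  adj := Over.postAdjunctionRight Q.adj
  map_cof f hf := Q.map_cof f.left hf
  map_trivCof_weq f hf hf' := Q.map_trivCof_weq f.left hf hf'

theorem slice_induced_quillen_equivalence_general {C : Type u} [Category.{v} C]
    {D : Type u'} [Category.{v'} D]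
    [HasColimits C] [HasLimits D]
    (M : ModelStruct C) (N : ModelStruct D) {S : C ⥤ D} {U : D ⥤ C}
    (Q : QuillenAdjunction M N S U) (hQ : IsQuillenEquivalence M N Q.adj)
    (Y : D) (hY : N.Fibrant Y) :
    ∃ QA : QuillenAdjunction (M.over (U.obj Y)) (N.over Y)
        (Over.post S ⋙ Over.map (Q.adj.counit.app Y)) (Over.post U),
      IsQuillenEquivalence (M.over (U.obj Y)) (N.over Y) QA.adj := by
  refine ⟨Q.over Y, fun A B hA hB f => ?_⟩
  change N.weq f.left ↔ M.weq ((Over.postAdjunctionRight Q.adj).homEquiv A B f).left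
  rw [Over.postAdjunctionRight_homEquiv_left]
  exact hQ A.left B.left hA.left (hB.left hY) f.left

/-- **Statement 12.** If `(S, U) : C → D` is a Quillen equivalence and `Y` is a fibrant object
of `D`, then the induced Quillen adjunction `(S̃, Ũ) : (C ↓ U Y) → (D ↓ Y)` between the slice
categories is a Quillen equivalence. -/
theorem slice_induced_quillen_equivalence {C : Type u} [Category.{v} C]
    {D : Type u'} [Category.{v'} D]
    [HasLimits C] [HasColimits C] [HasLimits D] [HasColimits D]
    (M : ModelStruct C) (N : ModelStruct D) {S : C ⥤ D} {U : D ⥤ C}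
    (Q : QuillenAdjunction M N S U) (hQ : IsQuillenEquivalence M N Q.adj)
    (Y : D) (hY : N.Fibrant Y) :
    ∃ QA : QuillenAdjunction (M.over (U.obj Y)) (N.over Y)
        (Over.post S ⋙ Over.map (Q.adj.counit.app Y)) (Over.post U),
      IsQuillenEquivalence (M.over (U.obj Y)) (N.over Y) QA.adj :=
  slice_induced_quillen_equivalence_general M N Q hQ Y hY
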